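/- arXiv:2603.23920 — 4 statements merged into one kernel-verified Lean document; each statement's English description precedes it below -/
import Mathlib

section
/- If $x_1, \ldots, x_p$ are real numbers with $\sum_{i=1}^p |x_i| = 1$ and $\sum_{i=1}^p x_i = 0$, and $a_1, \ldots, a_p$ are real numbers, then $\left|\sum_{i=1}^p a_i x_i\right| \le \frac{1}{2}\left(\max_{1\le i \le p} a_i - \min_{1 \le i \le p} a_i\right)$. -/
open Finset

/-- If `x₁, …, x_p` are reals with `∑ |xᵢ| = 1` and `∑ xᵢ = 0`, then for any reals
`a₁, …, a_p` we have `|∑ aᵢ xᵢ| ≤ (max aᵢ - min aᵢ) / 2`. -/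
theorem abs_sum_le_half_max_sub_min {p : ℕ} (hp : 0 < p) (x a : Fin p → ℝ)
    (hx1 : ∑ i, |x i| = 1) (hx0 : ∑ i, x i = 0) :
    |∑ i, a i * x i| ≤
      (Finset.univ.sup' ⟨⟨0, hp⟩, Finset.mem_univ _⟩ a
        - Finset.univ.inf' ⟨⟨0, hp⟩, Finset.mem_univ _⟩ a) / 2 := by
  have hne : (Finset.univ : Finset (Fin p)).Nonempty := ⟨⟨0, hp⟩, Finset.mem_univ _⟩
  set M := Finset.univ.sup' hne a with hM
  set m := Finset.univ.inf' hne a with hm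
  set c := (M + m) / 2 with hc
  have key : ∑ i, a i * x i = ∑ i, (a i - c) * x i := by
    rw [Finset.sum_congr rfl (fun i _ => sub_mul (a i) c (x i)), Finset.sum_sub_distrib,
      ← Finset.mul_sum, hx0, mul_zero, sub_zero]
  rw [key]
  calc |∑ i, (a i - c) * x i| ≤ ∑ i, |(a i - c) * x i| := Finset.abs_sum_le_sum_abs _ _
    _ ≤ ∑ i, (M - m) / 2 * |x i| := by
        apply Finset.sum_le_sum
        intro i _
        rw [abs_mul]
        apply mul_le_mul_of_nonneg_right _ (abs_nonneg _)
        rw [abs_le]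
        have h1 : a i ≤ M := Finset.le_sup' a (Finset.mem_univ i)
        have h2 : m ≤ a i := Finset.inf'_le a (Finset.mem_univ i)
        constructor <;> (rw [hc]; linarith)
    _ = (M - m) / 2 := by rw [← Finset.mul_sum, hx1, mul_one]
end

section
/- Let $G$ be a graph on $n \ge 2$ vertices with $m$ edges and let $0 \le \alpha < 1$. Then the $A_\alpha$-energy satisfies $E_{A_\alpha}(G) \le 4\alpha m (1 - \frac{1}{n})$ if $\alpha \ge \frac{n}{2(n-1)}$, and $E_{A_\alpha}(G) \le 2m(1 - \frac{2\alpha}{n})$ if $\alpha < \frac{n}{2(n-1)}$. -/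
/-!
Let `U` be an orthogonal matrix diagonalising `A_α(G)`. Then `E_{A_α}(G) = Φ(A_α(G) - (2αm/n) I)`
for the seminorm `Φ(M) = ∑ⱼ |(Uᵀ M U)ⱼⱼ|`, and `Φ(P) = tr P` for every positive semidefinite `P`,
so `Φ` can replace the trace norm in the Ky Fan argument. Write `A_α(G) - (2αm/n) I` as a sum over
the edges `uv` and split each summand along the positive semidefinite matrices `xxᵀ`, `yyᵀ`
(`x = e_u + e_v`, `y = e_u - e_v`) and `D = I - e_u e_uᵀ - e_v e_vᵀ`. Each edge then costs at most
`|1 - 2α/n| + |2α - 1 - 2α/n| + (2α/n)(n - 2)`, and the two cases of the theorem are the two signs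
of `2α - 1 - 2α/n`.
-/

open Finset Matrix
open scoped ComplexOrder

namespace Matrix

section DiagL1Seminorm

variable {n 𝕜 : Type*} [Fintype n] [DecidableEq n] [RCLike 𝕜]

/-- The `ℓ¹`-norm of the diagonal of `M` in the orthonormal basis formed by the columns of `U`:
a lower bound for the trace norm, attained on the matrices that `U` diagonalises. -/
noncomputable def diagL1Seminorm (U : unitaryGroup n 𝕜) : Seminorm 𝕜 (Matrix n n 𝕜) :=
  Seminorm.of (fun M => ∑ j, ‖(star (U : Matrix n n 𝕜) * M * (U : Matrix n n 𝕜)) j j‖)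
    (fun M N => by
      simp only [Matrix.mul_add, Matrix.add_mul, add_apply, ← sum_add_distrib]
      exact sum_le_sum fun j _ => norm_add_le _ _)
    (fun c M => by
      simp only [Matrix.mul_smul, Matrix.smul_mul, smul_apply, smul_eq_mul, norm_mul,
        mul_sum])

theorem diagL1Seminorm_apply (U : unitaryGroup n 𝕜) (M : Matrix n n 𝕜) :
    diagL1Seminorm U M = ∑ j, ‖(star (U : Matrix n n 𝕜) * M * (U : Matrix n n 𝕜)) j j‖ :=
  rfl

theorem trace_star_mul_mul_unitary (U : unitaryGroup n 𝕜) (M : Matrix n n 𝕜) :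
    trace (star (U : Matrix n n 𝕜) * M * (U : Matrix n n 𝕜)) = trace M := by
  rw [trace_mul_cycle, Unitary.mul_star_self_of_mem U.2, Matrix.one_mul]

theorem PosSemidef.diagL1Seminorm_eq (U : unitaryGroup n 𝕜) {P : Matrix n n 𝕜}
    (hP : P.PosSemidef) : diagL1Seminorm U P = RCLike.re P.trace := by
  have hconj : (star (U : Matrix n n 𝕜) * P * (U : Matrix n n 𝕜)).PosSemidef := by
    simpa [star_eq_conjTranspose] using hP.conjTranspose_mul_mul_same (U : Matrix n n 𝕜)
  rw [diagL1Seminorm_apply, ← trace_star_mul_mul_unitary U, trace, map_sum]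
  refine sum_congr rfl fun j _ => ?_
  rw [← RCLike.ofReal_re (K := 𝕜) ‖_‖, RCLike.norm_of_nonneg' hconj.diag_nonneg, diag_apply]

theorem IsHermitian.diagL1Seminorm_sub_smul_one {A : Matrix n n 𝕜} (hA : A.IsHermitian)
    (c : ℝ) :
    diagL1Seminorm hA.eigenvectorUnitary (A - c • 1) = ∑ j, |hA.eigenvalues j - c| := by
  have hdiag : star (hA.eigenvectorUnitary : Matrix n n 𝕜) * A *
      (hA.eigenvectorUnitary : Matrix n n 𝕜) = diagonal (RCLike.ofReal ∘ hA.eigenvalues) := by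
    simpa using hA.conjStarAlgAut_star_eigenvectorUnitary
  simp only [diagL1Seminorm_apply, Matrix.mul_sub, Matrix.sub_mul, Matrix.mul_smul,
    Matrix.smul_mul, Matrix.mul_one, Unitary.coe_star_mul_self, hdiag]
  refine sum_congr rfl fun j _ => ?_
  simp only [sub_apply, smul_apply, diagonal_apply_eq, one_apply_eq, Function.comp_apply]
  rw [RCLike.real_smul_eq_coe_mul, mul_one, ← RCLike.ofReal_sub, RCLike.norm_ofReal]

end DiagL1Seminorm

section SingleEdge

variable {n R : Type*} [DecidableEq n]

theorem posSemidef_one_sub_single_sub_single {𝕜 : Type*} [RCLike 𝕜] {u v : n} (huv : u ≠ v) :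
    (1 - single u u 1 - single v v (1 : 𝕜)).PosSemidef := by
  rw [← diagonal_single, ← diagonal_single, ← diagonal_one, diagonal_sub, diagonal_sub]
  refine posSemidef_diagonal_iff.mpr fun w => ?_
  by_cases hu : w = u <;> by_cases hv : w = v <;> simp_all

variable [Fintype n] [Ring R]

theorem trace_one_sub_single_sub_single (u v : n) :
    (1 - single u u 1 - single v v (1 : R)).trace = (Fintype.card n : R) - 2 := by
  rw [trace_sub, trace_sub, trace_one, trace_single_eq_same, trace_single_eq_same, sub_sub,
    one_add_one_eq_two]

theorem trace_vecMulVec_single_add_single {u v : n} (huv : u ≠ v) :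
    (vecMulVec (Pi.single u 1 + Pi.single v 1 : n → R) (Pi.single u 1 + Pi.single v 1)).trace
      = 2 := by
  simp [huv, huv.symm, one_add_one_eq_two]

theorem trace_vecMulVec_single_sub_single {u v : n} (huv : u ≠ v) :
    (vecMulVec (Pi.single u 1 - Pi.single v 1 : n → R) (Pi.single u 1 - Pi.single v 1)).trace
      = 2 := by
  simp [huv, huv.symm, one_add_one_eq_two]

end SingleEdge

end Matrix

namespace SimpleGraph

variable {V : Type*} [Fintype V] (G : SimpleGraph V) [DecidableRel G.Adj]

theorem sum_sum_neighborFinset_swap {M : Type*} [AddCommMonoid M] (f : V → V → M) :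
    ∑ u, ∑ v ∈ G.neighborFinset u, f v u = ∑ u, ∑ v ∈ G.neighborFinset u, f u v :=
  sum_comm' (by simp [adj_comm, and_comm])

variable [DecidableEq V] {R : Type*} [AddCommMonoidWithOne R]

theorem sum_sum_neighborFinset_single_self :
    ∑ u, ∑ _v ∈ G.neighborFinset u, single u u (1 : R) = diagonal fun v => (G.degree v : R) := by
  simp only [sum_const, card_neighborFinset_eq_degree, smul_single, nsmul_one]
  exact sum_single_eq_diagonal _

theorem sum_sum_neighborFinset_single :
    ∑ u, ∑ v ∈ G.neighborFinset u, single u v (1 : R) = G.adjMatrix R := by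
  ext i j
  simp [Matrix.sum_apply, single_apply, adjMatrix_apply, ite_and, sum_ite_eq']

end SimpleGraph

section AalphaEnergy

variable {V : Type*} [DecidableEq V] [Fintype V]

noncomputable def aalphaEdgeMatrix (α : ℝ) (u v : V) : Matrix V V ℝ :=
  α • (single u u 1 + single v v 1) + (1 - α) • (single u v 1 + single v u 1)
    - (2 * α / Fintype.card V) • 1

theorem sum_aalphaEdgeMatrix (G : SimpleGraph V) [DecidableRel G.Adj] (α : ℝ) :
    ∑ u, ∑ v ∈ G.neighborFinset u, aalphaEdgeMatrix α u v =
      (2 : ℝ) • (α • diagonal (fun v => (G.degree v : ℝ)) + (1 - α) • G.adjMatrix ℝ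
        - (2 * α * #G.edgeFinset / Fintype.card V) • 1) := by
  have hone : ∑ u, ∑ _v ∈ G.neighborFinset u, (1 : Matrix V V ℝ)
      = (2 * #G.edgeFinset : ℝ) • 1 := by
    simp only [sum_const, G.card_neighborFinset_eq_degree, ← sum_smul,
      G.sum_degrees_eq_twice_card_edges]
    norm_cast
  simp only [aalphaEdgeMatrix, sum_sub_distrib, sum_add_distrib, ← smul_sum,
    G.sum_sum_neighborFinset_swap fun u v => single u u (1 : ℝ),
    G.sum_sum_neighborFinset_swap fun u v => single u v (1 : ℝ),
    G.sum_sum_neighborFinset_single_self, G.sum_sum_neighborFinset_single, hone]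
  module

/- Uses `I = (xxᵀ + yyᵀ) / 2 + D`: that part of `-(2α/n) I` is absorbed into the rank-one terms,
where it partly cancels, instead of being charged its full trace. -/
theorem aalphaEdgeMatrix_eq (α : ℝ) (u v : V) :
    aalphaEdgeMatrix α u v =
      ((1 - 2 * α / Fintype.card V) / 2) •
          vecMulVec (Pi.single u 1 + Pi.single v 1) (Pi.single u 1 + Pi.single v 1)
        + ((2 * α - 1 - 2 * α / Fintype.card V) / 2) •
          vecMulVec (Pi.single u 1 - Pi.single v 1) (Pi.single u 1 - Pi.single v 1)
        - (2 * α / Fintype.card V) • (1 - single u u 1 - single v v 1) := by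
  simp only [aalphaEdgeMatrix, add_vecMulVec, vecMulVec_add, sub_vecMulVec, vecMulVec_sub,
    ← single_eq_single_vecMulVec_single]
  module

theorem diagL1Seminorm_aalphaEdgeMatrix_le (U : unitaryGroup V ℝ) (α : ℝ) {u v : V}
    (huv : u ≠ v) :
    diagL1Seminorm U (aalphaEdgeMatrix α u v) ≤
      |1 - 2 * α / Fintype.card V| + |2 * α - 1 - 2 * α / Fintype.card V|
        + |2 * α / Fintype.card V| * (Fintype.card V - 2) := by
  have hX := posSemidef_vecMulVec_self_star (Pi.single u 1 + Pi.single v 1 : V → ℝ)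
  have hY := posSemidef_vecMulVec_self_star (Pi.single u 1 - Pi.single v 1 : V → ℝ)
  simp only [star_trivial] at hX hY
  rw [aalphaEdgeMatrix_eq]
  refine (map_sub_le_add _ _ _).trans ((add_le_add_left (map_add_le_add _ _ _) _).trans_eq ?_)
  simp only [map_smul_eq_mul, Real.norm_eq_abs, hX.diagL1Seminorm_eq, hY.diagL1Seminorm_eq,
    (posSemidef_one_sub_single_sub_single huv).diagL1Seminorm_eq, RCLike.re_to_real,
    trace_vecMulVec_single_add_single huv, trace_vecMulVec_single_sub_single huv,
    trace_one_sub_single_sub_single, abs_div, abs_two]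
  ring

theorem sum_abs_eigenvalues_aalpha_sub_le (G : SimpleGraph V) [DecidableRel G.Adj] (α : ℝ)
    (hH : (α • diagonal (fun v => (G.degree v : ℝ)) + (1 - α) • G.adjMatrix ℝ).IsHermitian) :
    ∑ i, |hH.eigenvalues i - 2 * α * #G.edgeFinset / Fintype.card V| ≤
      #G.edgeFinset * (|1 - 2 * α / Fintype.card V| + |2 * α - 1 - 2 * α / Fintype.card V|
        + |2 * α / Fintype.card V| * (Fintype.card V - 2)) := by
  set K := |1 - 2 * α / Fintype.card V| + |2 * α - 1 - 2 * α / Fintype.card V|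
    + |2 * α / Fintype.card V| * (Fintype.card V - 2)
  set Φ := diagL1Seminorm hH.eigenvectorUnitary
  have hsub (s : Finset V) (f : V → Matrix V V ℝ) : Φ (∑ i ∈ s, f i) ≤ ∑ i ∈ s, Φ (f i) :=
    le_sum_of_subadditive Φ (map_zero Φ).le (map_add_le_add Φ) s f
  calc ∑ i, |hH.eigenvalues i - 2 * α * #G.edgeFinset / Fintype.card V|
      = Φ (α • diagonal (fun v => (G.degree v : ℝ)) + (1 - α) • G.adjMatrix ℝ
          - (2 * α * #G.edgeFinset / Fintype.card V) • 1) :=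
        (hH.diagL1Seminorm_sub_smul_one _).symm
    _ = Φ ((1 / 2 : ℝ) • ∑ u, ∑ v ∈ G.neighborFinset u, aalphaEdgeMatrix α u v) := by
        rw [sum_aalphaEdgeMatrix, smul_smul]
        norm_num
    _ ≤ 1 / 2 * ∑ u, ∑ v ∈ G.neighborFinset u, Φ (aalphaEdgeMatrix α u v) := by
        rw [map_smul_eq_mul, Real.norm_of_nonneg (by norm_num)]
        gcongr
        exact (hsub _ _).trans (sum_le_sum fun u _ => hsub _ _)
    _ ≤ 1 / 2 * ∑ u, ∑ _v ∈ G.neighborFinset u, K := by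
        gcongr with u _ v hv
        exact diagL1Seminorm_aalphaEdgeMatrix_le _ α
          (G.ne_of_adj ((G.mem_neighborFinset u v).mp hv))
    _ = #G.edgeFinset * K := by
        simp only [sum_const, G.card_neighborFinset_eq_degree, nsmul_eq_mul,
          ← sum_mul]
        rw [← Nat.cast_sum, G.sum_degrees_eq_twice_card_edges]
        push_cast
        ring

end AalphaEnergy

/-- For a graph `G` on `n ≥ 2` vertices with `m` edges and `0 ≤ α < 1`, the
`A_α`-energy `∑ i, |ρ i - 2αm/n|` satisfies `E ≤ 4 α m (1 - 1/n)` when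
`α ≥ n / (2(n-1))`, and `E ≤ 2 m (1 - 2α/n)` when `α < n / (2(n-1))`. -/
theorem energy_Aalpha_upper_bound {V : Type*} [Fintype V] [DecidableEq V]
    (G : SimpleGraph V) [DecidableRel G.Adj] (hn : 2 ≤ Fintype.card V)
    (α : ℝ) (hα0 : 0 ≤ α) (hα1 : α < 1)
    (hH : (α • Matrix.diagonal (fun v => (G.degree v : ℝ))
        + (1 - α) • G.adjMatrix ℝ).IsHermitian) :
    (((Fintype.card V : ℝ) / (2 * ((Fintype.card V : ℝ) - 1)) ≤ α →
      ∑ i, |hH.eigenvalues i - 2 * α * (G.edgeFinset.card : ℝ) / (Fintype.card V : ℝ)|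
        ≤ 4 * α * (G.edgeFinset.card : ℝ) * (1 - 1 / (Fintype.card V : ℝ)))) ∧
    ((α < (Fintype.card V : ℝ) / (2 * ((Fintype.card V : ℝ) - 1)) →
      ∑ i, |hH.eigenvalues i - 2 * α * (G.edgeFinset.card : ℝ) / (Fintype.card V : ℝ)|
        ≤ 2 * (G.edgeFinset.card : ℝ) * (1 - 2 * α / (Fintype.card V : ℝ)))) := by
  have hbound := sum_abs_eigenvalues_aalpha_sub_le G α hH
  have hn2 : (2 : ℝ) ≤ Fintype.card V := by exact_mod_cast hn
  set n : ℝ := (Fintype.card V : ℝ)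
  set m : ℝ := (#G.edgeFinset : ℝ)
  have h1 : 0 ≤ 1 - 2 * α / n := by
    rw [sub_nonneg, div_le_one (by positivity)]
    linarith
  rw [abs_of_nonneg h1, abs_of_nonneg (by positivity : 0 ≤ 2 * α / n)] at hbound
  have hthreshold : n / (2 * (n - 1)) ≤ α ↔ 0 ≤ 2 * α - 1 - 2 * α / n := by
    rw [div_le_iff₀ (by linarith), show 2 * α - 1 - 2 * α / n = (α * (2 * (n - 1)) - n) / n by
      field_simp; ring, le_div_iff₀ (by positivity), zero_mul, sub_nonneg]
  refine ⟨fun hα => hbound.trans ?_, fun hα => hbound.trans_eq ?_⟩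
  · rw [abs_of_nonneg (hthreshold.mp hα)]
    have hgap : 0 ≤ 4 * α * m / n := by positivity
    have hsum : m * (1 - 2 * α / n + (2 * α - 1 - 2 * α / n) + 2 * α / n * (n - 2))
        = 4 * α * m * (1 - 1 / n) - 4 * α * m / n := by
      field_simp
      ring
    linarith
  · rw [abs_of_neg (lt_of_not_ge (hthreshold.not.mp (not_le.mpr hα)))]
    field_simp
    ring
end

section
/- Let $G$ be a graph on $n$ vertices with $m \ge 1$ edges, first Zagreb index $Z_1$, and let $0 \le \alpha < 1$. Let $\rho_1 \ge \cdots \ge \rho_n$ be the eigenvalues of $A_\alpha(G)$ and $\Theta_{A_\alpha}(G) = \rho_1 - \rho_n$ the $A_\alpha$-spread. If $\Theta_{A_\alpha}(G) > 0$, then $E_{A_\alpha}(G) \ge \frac{2}{\Theta_{A_\alpha}(G)}\left[\alpha^2 Z_1 + 2(1-\alpha)^2 m - \frac{4\alpha^2 m^2}{n}\right]$. -/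
/-!
Centre the eigenvalues at their mean `c = 2αm/n`. The trace identities `tr A_α = 2αm` and
`tr A_α² = α² Z₁ + 2(1-α)² m` turn the bracket into `∑ (ρᵢ - c)²`. Since `∑ (ρᵢ - c) = 0`, this
equals `∑ (ρᵢ - μ) (ρᵢ - c)` for the midpoint `μ` of `[ρₙ, ρ₁]`, and `|ρᵢ - μ| ≤ Θ/2`.
-/

open Finset

namespace Matrix.IsHermitian

variable {n 𝕜 : Type*} [Fintype n] [DecidableEq n] [RCLike 𝕜] {A : Matrix n n 𝕜}

theorem trace_mul_self_eq_sum_sq_eigenvalues (hA : A.IsHermitian) :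
    (A * A).trace = ∑ i, (hA.eigenvalues i : 𝕜) ^ 2 := by
  conv_lhs => rw [hA.spectral_theorem, ← map_mul, Unitary.conjStarAlgAut_apply, trace_mul_cycle,
    Unitary.coe_star_mul_self, one_mul, diagonal_mul_diagonal, trace_diagonal]
  simp [sq]

end Matrix.IsHermitian

theorem Finset.sum_mul_le_of_mem_Icc_of_sum_eq_zero {ι : Type*} (s : Finset ι) {a x : ι → ℝ}
    {lo hi : ℝ} (ha : ∀ i ∈ s, a i ∈ Set.Icc lo hi) (hx : ∑ i ∈ s, x i = 0) :
    ∑ i ∈ s, a i * x i ≤ (hi - lo) / 2 * ∑ i ∈ s, |x i| := by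
  have hcenter : ∑ i ∈ s, a i * x i = ∑ i ∈ s, (a i - (lo + hi) / 2) * x i := by
    simp only [sub_mul, sum_sub_distrib, ← mul_sum, hx, mul_zero, sub_zero]
  rw [hcenter, mul_sum]
  refine sum_le_sum fun i hi' => ?_
  have hdist : |a i - (lo + hi) / 2| ≤ (hi - lo) / 2 := by
    obtain ⟨hlo, hhi⟩ := ha i hi'
    rw [abs_le]; constructor <;> linarith
  calc (a i - (lo + hi) / 2) * x i ≤ |a i - (lo + hi) / 2| * |x i| := by
        rw [← abs_mul]; exact le_abs_self _
    _ ≤ (hi - lo) / 2 * |x i| := by gcongr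

theorem Finset.sum_sq_sub_le_spread_mul_sum_abs_sub {ι : Type*} [Fintype ι] [Nonempty ι]
    (f : ι → ℝ) {c : ℝ} (hc : ∑ i, (f i - c) = 0) :
    ∑ i, (f i - c) ^ 2 ≤
      (univ.sup' univ_nonempty f - univ.inf' univ_nonempty f) / 2 * ∑ i, |f i - c| := by
  have hsq : ∑ i, (f i - c) ^ 2 = ∑ i, f i * (f i - c) := by
    simp only [sq, sub_mul, sum_sub_distrib, ← mul_sum, hc, mul_zero, sub_zero]
  rw [hsq]
  exact sum_mul_le_of_mem_Icc_of_sum_eq_zero _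
    (fun i _ => ⟨inf'_le f (mem_univ i), le_sup' f (mem_univ i)⟩) hc

theorem Finset.sum_sub_sq_eq {ι R : Type*} [CommRing R] (s : Finset ι) (f : ι → R) (c : R) :
    ∑ i ∈ s, (f i - c) ^ 2 = ∑ i ∈ s, f i ^ 2 - 2 * c * ∑ i ∈ s, f i + #s * c ^ 2 := by
  simp only [sub_sq, sum_add_distrib, sum_sub_distrib, mul_sum, sum_const, nsmul_eq_mul]
  congr 2; refine sum_congr rfl fun i _ => by ring

namespace SimpleGraph

variable {V R : Type*} [Fintype V] (G : SimpleGraph V) [DecidableRel G.Adj] [CommRing R]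

theorem sum_natCast_degrees_eq_twice_card_edges :
    ∑ v, (G.degree v : R) = 2 * #G.edgeFinset := by
  rw [← Nat.cast_sum, G.sum_degrees_eq_twice_card_edges, Nat.cast_mul, Nat.cast_ofNat]

theorem trace_adjMatrix_mul_self :
    (G.adjMatrix R * G.adjMatrix R).trace = 2 * #G.edgeFinset := by
  simp only [Matrix.trace, Matrix.diag, adjMatrix_mul_self_apply_self,
    sum_natCast_degrees_eq_twice_card_edges]

variable [DecidableEq V]

def aAlphaMatrix (α : R) : Matrix V V R :=
  α • Matrix.diagonal (fun v => (G.degree v : R)) + (1 - α) • G.adjMatrix R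

theorem trace_diagonal_degree_mul_adjMatrix :
    (Matrix.diagonal (fun v => (G.degree v : R)) * G.adjMatrix R).trace = 0 := by
  simp [Matrix.trace, Matrix.diagonal_mul, -mul_adjMatrix_apply]

theorem trace_adjMatrix_mul_diagonal_degree :
    (G.adjMatrix R * Matrix.diagonal (fun v => (G.degree v : R))).trace = 0 := by
  rw [Matrix.trace_mul_comm, trace_diagonal_degree_mul_adjMatrix]

theorem trace_aAlphaMatrix (α : R) :
    (G.aAlphaMatrix α).trace = 2 * α * #G.edgeFinset := by
  simp only [aAlphaMatrix, Matrix.trace_add, Matrix.trace_smul, Matrix.trace_diagonal,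
    sum_natCast_degrees_eq_twice_card_edges, trace_adjMatrix, smul_eq_mul]
  ring

theorem trace_aAlphaMatrix_mul_self (α : R) :
    (G.aAlphaMatrix α * G.aAlphaMatrix α).trace =
      α ^ 2 * ∑ v, (G.degree v : R) ^ 2 + 2 * (1 - α) ^ 2 * #G.edgeFinset := by
  simp only [aAlphaMatrix, add_mul, mul_add, Matrix.smul_mul, Matrix.mul_smul, Matrix.trace_add,
    Matrix.trace_smul, trace_diagonal_degree_mul_adjMatrix, trace_adjMatrix_mul_diagonal_degree,
    trace_adjMatrix_mul_self, Matrix.diagonal_mul_diagonal, Matrix.trace_diagonal, smul_eq_mul,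
    sq]
  ring

end SimpleGraph

theorem energy_Aalpha_spread_lower_bound_general {V : Type*} [Fintype V] [DecidableEq V]
    [Nonempty V] (G : SimpleGraph V) [DecidableRel G.Adj]
    (α : ℝ)
    (hH : (α • Matrix.diagonal (fun v => (G.degree v : ℝ))
        + (1 - α) • G.adjMatrix ℝ).IsHermitian)
    (hΘ : 0 < Finset.univ.sup' Finset.univ_nonempty hH.eigenvalues
        - Finset.univ.inf' Finset.univ_nonempty hH.eigenvalues) :
    2 / (Finset.univ.sup' Finset.univ_nonempty hH.eigenvalues
          - Finset.univ.inf' Finset.univ_nonempty hH.eigenvalues)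
        * (α ^ 2 * (∑ v, (G.degree v : ℝ) ^ 2)
            + 2 * (1 - α) ^ 2 * (G.edgeFinset.card : ℝ)
            - 4 * α ^ 2 * (G.edgeFinset.card : ℝ) ^ 2 / (Fintype.card V : ℝ))
      ≤ ∑ i, |hH.eigenvalues i
          - 2 * α * (G.edgeFinset.card : ℝ) / (Fintype.card V : ℝ)| := by
  set ρ := hH.eigenvalues
  set c := 2 * α * (#G.edgeFinset : ℝ) / Fintype.card V with hc
  have hn : (Fintype.card V : ℝ) ≠ 0 := by positivity
  have htrace : ∑ i, ρ i = 2 * α * #G.edgeFinset := by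
    simpa using hH.trace_eq_sum_eigenvalues.symm.trans (G.trace_aAlphaMatrix α)
  have htrace_sq : ∑ i, ρ i ^ 2 = α ^ 2 * ∑ v, (G.degree v : ℝ) ^ 2
      + 2 * (1 - α) ^ 2 * #G.edgeFinset := by
    simpa using hH.trace_mul_self_eq_sum_sq_eigenvalues.symm.trans
      (G.trace_aAlphaMatrix_mul_self α)
  have hcentered : ∑ i, (ρ i - c) = 0 := by
    rw [sum_sub_distrib, htrace, sum_const, card_univ, nsmul_eq_mul, hc]
    field_simp
    ring
  have hvariance : ∑ i, (ρ i - c) ^ 2 = α ^ 2 * ∑ v, (G.degree v : ℝ) ^ 2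
      + 2 * (1 - α) ^ 2 * #G.edgeFinset
      - 4 * α ^ 2 * (#G.edgeFinset : ℝ) ^ 2 / Fintype.card V := by
    rw [sum_sub_sq_eq, htrace, htrace_sq, card_univ, hc]
    field_simp
    ring
  rw [← hvariance, div_mul_eq_mul_div, div_le_iff₀ hΘ]
  linarith [sum_sq_sub_le_spread_mul_sum_abs_sub ρ hcentered]

/-- Spread lower bound for the `A_α`-energy: if `Θ = ρ₁ - ρ_n > 0` is the
`A_α`-spread of a graph `G` on `n` vertices with `m ≥ 1` edges and first Zagreb
index `Z₁`, then for `0 ≤ α < 1`,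
`E_{A_α}(G) ≥ (2/Θ) [α² Z₁ + 2(1-α)² m - 4 α² m² / n]`. -/
theorem energy_Aalpha_spread_lower_bound {V : Type*} [Fintype V] [DecidableEq V]
    [Nonempty V] (G : SimpleGraph V) [DecidableRel G.Adj]
    (hm : 1 ≤ G.edgeFinset.card)
    (α : ℝ) (hα0 : 0 ≤ α) (hα1 : α < 1)
    (hH : (α • Matrix.diagonal (fun v => (G.degree v : ℝ))
        + (1 - α) • G.adjMatrix ℝ).IsHermitian)
    (hΘ : 0 < Finset.univ.sup' Finset.univ_nonempty hH.eigenvalues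
        - Finset.univ.inf' Finset.univ_nonempty hH.eigenvalues) :
    2 / (Finset.univ.sup' Finset.univ_nonempty hH.eigenvalues
          - Finset.univ.inf' Finset.univ_nonempty hH.eigenvalues)
        * (α ^ 2 * (∑ v, (G.degree v : ℝ) ^ 2)
            + 2 * (1 - α) ^ 2 * (G.edgeFinset.card : ℝ)
            - 4 * α ^ 2 * (G.edgeFinset.card : ℝ) ^ 2 / (Fintype.card V : ℝ))
      ≤ ∑ i, |hH.eigenvalues i
          - 2 * α * (G.edgeFinset.card : ℝ) / (Fintype.card V : ℝ)| :=
  energy_Aalpha_spread_lower_bound_general G α hH hΘ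
end

section
/- Let $M$ and $N$ be real symmetric $p \times p$ matrices and $1 \le k \le p$. Then the sum of the $k$ largest eigenvalues of $M + N$ is at most the sum of the $k$ largest eigenvalues of $M$ plus the sum of the $k$ largest eigenvalues of $N$ (Ky Fan's inequality). -/
open Finset

/-- `μ` is a decreasing enumeration of the eigenvalues of the real symmetric
matrix `M`. -/
def IsSortedEigs {p : ℕ} (M : Matrix (Fin p) (Fin p) ℝ) (hM : M.IsHermitian)
    (μ : Fin p → ℝ) : Prop :=
  Antitone μ ∧ ∃ σ : Equiv.Perm (Fin p), μ = hM.eigenvalues ∘ σ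
/-!
Ky Fan's maximum principle: for an orthogonal `V` and a set `S` of `k` columns, the partial trace
`∑ j ∈ S, (Vᵀ A V) j j` equals `∑ i, λᵢ wᵢ` with weights `wᵢ = ∑ j ∈ S, (Uᵀ V)ᵢⱼ²` (`U` an
eigenbasis of `A`) lying in `[0, 1]` and summing to `k`, hence is at most the sum of the `k` largest
eigenvalues of `A`. Take `V` an eigenbasis of `M + N` and `S` the columns carrying its `k` largest
eigenvalues: then the left-hand side is the partial trace of `Vᵀ (M + N) V = Vᵀ M V + Vᵀ N V`, and
the maximum principle bounds both terms.
-/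

open Matrix

section Threshold
variable {ι : Type*} [Fintype ι]

theorem sum_mul_le_sum_of_threshold {μ w : ι → ℝ} {T : Finset ι} {c : ℝ}
    (hT : ∀ i ∈ T, c ≤ μ i) (hTc : ∀ i ∉ T, μ i ≤ c)
    (hw₀ : ∀ i, 0 ≤ w i) (hw₁ : ∀ i, w i ≤ 1) (hw : ∑ i, w i = #T) :
    ∑ i, μ i * w i ≤ ∑ i ∈ T, μ i := by
  classical
  have key : ∀ i, μ i * w i ≤ (if i ∈ T then μ i - c else 0) + c * w i := by
    intro i
    split_ifs with hi
    · nlinarith [hT i hi, hw₁ i]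
    · nlinarith [hTc i hi, hw₀ i]
  calc ∑ i, μ i * w i ≤ ∑ i, ((if i ∈ T then μ i - c else 0) + c * w i) :=
        sum_le_sum fun i _ => key i
    _ = ∑ i ∈ T, μ i := by
      rw [sum_add_distrib, ← mul_sum, hw, sum_ite_mem, univ_inter, sum_sub_distrib, sum_const,
        nsmul_eq_mul]
      ring

end Threshold

theorem Antitone.exists_threshold {p : ℕ} {μ : Fin p → ℝ} (hμ : Antitone μ) (k : ℕ) :
    ∃ c, (∀ i : Fin p, (i : ℕ) < k → c ≤ μ i) ∧ ∀ i : Fin p, k ≤ (i : ℕ) → μ i ≤ c := by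
  by_cases hk : k < p
  · exact ⟨μ ⟨k, hk⟩, fun i hi => hμ (Fin.mk_le_of_le_val hi.le),
      fun i hi => hμ (Fin.mk_le_of_le_val hi)⟩
  · exact ⟨⨅ i, μ i, fun i _ => ciInf_le (Set.finite_range μ).bddBelow i,
      fun i hi => absurd i.2 (by omega)⟩

section Orthogonal
variable {n : Type*} [Fintype n] [DecidableEq n] {W : Matrix n n ℝ}

theorem sum_sq_apply_left_eq_one (hW : W ∈ unitaryGroup n ℝ) (j : n) :
    ∑ i, W i j ^ 2 = 1 := by
  have := congr_fun (congr_fun hW.1 j) j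
  simpa [mul_apply, sq] using this

theorem sum_sq_apply_right_eq_one (hW : W ∈ unitaryGroup n ℝ) (i : n) :
    ∑ j, W i j ^ 2 = 1 := by
  have := congr_fun (congr_fun hW.2 i) i
  simpa [mul_apply, sq] using this

theorem star_mul_diagonal_mul_apply_self (d : n → ℝ) (j : n) :
    (star W * diagonal d * W) j j = ∑ i, d i * W i j ^ 2 := by
  rw [mul_apply]
  simp only [mul_diagonal, star_apply, star_trivial]
  exact sum_congr rfl fun i _ => by ring

theorem exists_weights_sum_star_mul_diagonal_mul_apply_self (hW : W ∈ unitaryGroup n ℝ)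
    (d : n → ℝ) (S : Finset n) :
    ∃ w : n → ℝ, (∀ i, 0 ≤ w i) ∧ (∀ i, w i ≤ 1) ∧ ∑ i, w i = #S ∧
      ∑ j ∈ S, (star W * diagonal d * W) j j = ∑ i, d i * w i := by
  refine ⟨fun i => ∑ j ∈ S, W i j ^ 2, fun i => sum_nonneg fun j _ => sq_nonneg _, fun i => ?_,
    ?_, ?_⟩
  · calc ∑ j ∈ S, W i j ^ 2 ≤ ∑ j, W i j ^ 2 :=
          sum_le_sum_of_subset_of_nonneg (subset_univ S) fun j _ _ => sq_nonneg _
      _ = 1 := sum_sq_apply_right_eq_one hW i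
  · rw [sum_comm, sum_congr rfl fun j _ => sum_sq_apply_left_eq_one hW j, sum_const,
      nsmul_one]
  · simp only [star_mul_diagonal_mul_apply_self, mul_sum]
    exact sum_comm

theorem Matrix.IsHermitian.star_mul_mul_eq {A : Matrix n n ℝ} (hA : A.IsHermitian)
    (V : Matrix n n ℝ) :
    star V * A * V = star (star (hA.eigenvectorUnitary : Matrix n n ℝ) * V) *
      diagonal hA.eigenvalues * (star (hA.eigenvectorUnitary : Matrix n n ℝ) * V) := by
  conv_lhs => rw [hA.spectral_theorem, Unitary.conjStarAlgAut_apply]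
  simp only [RCLike.ofReal_real_eq_id, Function.id_comp, star_mul, star_star, Matrix.mul_assoc]

end Orthogonal

theorem IsSortedEigs.sum_star_mul_mul_apply_self_le {p : ℕ} {A : Matrix (Fin p) (Fin p) ℝ}
    {hA : A.IsHermitian} {μ : Fin p → ℝ} (hμ : IsSortedEigs A hA μ)
    {V : Matrix (Fin p) (Fin p) ℝ} (hV : V ∈ unitaryGroup (Fin p) ℝ) {k : ℕ}
    {S : Finset (Fin p)} (hS : #S = #{i : Fin p | (i : ℕ) < k}) :
    ∑ j ∈ S, (star V * A * V) j j ≤ ∑ i : Fin p, if (i : ℕ) < k then μ i else 0 := by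
  obtain ⟨hanti, σ, rfl⟩ := hμ
  have hW : star (hA.eigenvectorUnitary : Matrix (Fin p) (Fin p) ℝ) * V ∈ unitaryGroup _ ℝ :=
    mul_mem (Unitary.star_mem hA.eigenvectorUnitary.2) hV
  obtain ⟨w, hw₀, hw₁, hw, hdiag⟩ :=
    exists_weights_sum_star_mul_diagonal_mul_apply_self hW hA.eigenvalues S
  obtain ⟨c, hc_top, hc_rest⟩ := hanti.exists_threshold k
  rw [hA.star_mul_mul_eq, hdiag, ← sum_filter, ← Equiv.sum_comp σ]
  refine sum_mul_le_sum_of_threshold (T := {i : Fin p | (i : ℕ) < k}) (w := w ∘ σ)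
    (fun i hi => hc_top i (mem_filter.1 hi).2) (fun i hi => hc_rest i (by simpa using hi)) (fun i => hw₀ _) (fun i => hw₁ _) ?_
  exact (Equiv.sum_comp σ w).trans (hw.trans (congrArg _ hS))

theorem kyFan_sum_top_eigenvalues_general {p : ℕ} (M N : Matrix (Fin p) (Fin p) ℝ)
    (hM : M.IsHermitian) (hN : N.IsHermitian)
    (μ ν ρ : Fin p → ℝ) (hμ : IsSortedEigs M hM μ) (hν : IsSortedEigs N hN ν)
    (hρ : IsSortedEigs (M + N) (hM.add hN) ρ)
    (k : ℕ) :
    ∑ i : Fin p, (if (i : ℕ) < k then ρ i else 0)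
      ≤ (∑ i : Fin p, if (i : ℕ) < k then μ i else 0) + ∑ i : Fin p, (if (i : ℕ) < k then ν i else 0) := by
  obtain ⟨-, π, hπ⟩ := hρ
  set V := ((hM.add hN).eigenvectorUnitary : Matrix (Fin p) (Fin p) ℝ)
  have hV : V ∈ unitaryGroup (Fin p) ℝ := (hM.add hN).eigenvectorUnitary.2
  set S := image π {i : Fin p | (i : ℕ) < k}
  have hS : #S = #{i : Fin p | (i : ℕ) < k} := card_image_of_injective _ π.injective
  have hdiag : star V * (M + N) * V = diagonal (hM.add hN).eigenvalues := by
    simpa [Unitary.conjStarAlgAut_apply] using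
      (hM.add hN).conjStarAlgAut_star_eigenvectorUnitary
  calc ∑ i : Fin p, (if (i : ℕ) < k then ρ i else 0)
      = ∑ j ∈ S, (star V * (M + N) * V) j j := by
        rw [hdiag, ← sum_filter, sum_image fun a _ b _ h => π.injective h, hπ]
        simp
    _ = ∑ j ∈ S, (star V * M * V) j j + ∑ j ∈ S, (star V * N * V) j j := by
        simp only [Matrix.mul_add, Matrix.add_mul, Matrix.add_apply, sum_add_distrib]
    _ ≤ _ := add_le_add (hμ.sum_star_mul_mul_apply_self_le hV hS)
        (hν.sum_star_mul_mul_apply_self_le hV hS)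

/-- Ky Fan's inequality: the sum of the `k` largest eigenvalues of `M + N` is at
most the sum of the `k` largest eigenvalues of `M` plus that of `N`. -/
theorem kyFan_sum_top_eigenvalues {p : ℕ} (M N : Matrix (Fin p) (Fin p) ℝ)
    (hM : M.IsHermitian) (hN : N.IsHermitian)
    (μ ν ρ : Fin p → ℝ) (hμ : IsSortedEigs M hM μ) (hν : IsSortedEigs N hN ν)
    (hρ : IsSortedEigs (M + N) (hM.add hN) ρ)
    (k : ℕ) (hk1 : 1 ≤ k) (hkp : k ≤ p) :
    ∑ i : Fin p, (if (i : ℕ) < k then ρ i else 0)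
      ≤ (∑ i : Fin p, if (i : ℕ) < k then μ i else 0) + ∑ i : Fin p, (if (i : ℕ) < k then ν i else 0) :=
  kyFan_sum_top_eigenvalues_general M N hM hN μ ν ρ hμ hν hρ k
end
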